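/- Let n > m ≥ 0 and define H(j,k) = (−1)^{b(j,k)} for j, k ∈ {0, …, 2ⁿ − 1}, where b(j,k) is the number of bit positions at which the binary expansions of j and k both have a 1. For 0 ≤ i ≤ 2^{n−m} − 1, let W_i be the span in ℝ^{2ⁿ−2^m} of the vectors (H(j, i·2^m + r))_{2^m ≤ j ≤ 2ⁿ−1} for 0 ≤ r ≤ 2^m − 1. Then the subspaces W_i are pairwise equi-distant in the chordal distance: for all i₁ ≠ i₂, dist(W_{i₁}, W_{i₂}) = √(2^m − 2^m/(2^{n−m} − 1)²). -/

import Mathlib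

open scoped InnerProductSpace

/-- `bitOverlap j k` is the number of bit positions at which the binary
expansions of `j` and `k` both have a `1`. -/
def bitOverlap (j k : ℕ) : ℕ := (Nat.land j k).bits.count true

/-!
Write `v i r` for column `i * 2^m + r` of the Sylvester matrix with its first `2^m` rows removed.
Columns of the full matrix are orthogonal of squared norm `2^n`, and the removed rows form the
Sylvester matrix of order `2^m`, in which column `i * 2^m + r` coincides with column `r`. Hence
`⟪v i r, v i' r'⟫ = 2^n [i = i' ∧ r = r'] - 2^m [r = r']`: each `W i` has the orthogonal basis
`v i ·` of squared norm `c = 2^n - 2^m`, so its projection is `c⁻¹ ∑ r, |v i r⟩⟨v i r|`, and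
`trace (P₁ P₂) = c⁻² ∑ r r', ⟪v i₁ r, v i₂ r'⟫² = c⁻² 2^m 2^(2m) = 2^m / (2^(n-m) - 1)²`.
-/

open Finset InnerProductSpace

lemma count_true_bits_bit (b : Bool) (n : ℕ) :
    (Nat.bit b n).bits.count true = n.bits.count true + b.toNat := by
  by_cases h : n = 0 ∧ b = false
  · obtain ⟨rfl, rfl⟩ := h
    simp
  · rw [Nat.bits_append_bit n b (by grind)]
    cases b <;> simp

lemma bitOverlap_bit (b d : Bool) (a c : ℕ) :
    bitOverlap (Nat.bit b a) (Nat.bit d c) = bitOverlap a c + (b && d).toNat :=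
  count_true_bits_bit (b && d) (a &&& c) ▸
    congrArg (fun x => x.bits.count true) (Nat.land_bit b a d c)

def walsh (j k : ℕ) : ℝ := (-1) ^ bitOverlap j k

lemma walsh_bit (b : Bool) (t k : ℕ) :
    walsh (Nat.bit b t) k = walsh t (k / 2) * (-1) ^ (b && k.testBit 0).toNat := by
  conv_lhs => rw [← Nat.bit_testBit_zero_shiftRight_one k]
  rw [walsh, bitOverlap_bit, pow_add, Nat.shiftRight_one, walsh]

lemma Finset.sum_range_two_mul {M : Type*} [AddCommMonoid M] (f : ℕ → M) (N : ℕ) :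
    ∑ t ∈ range (2 * N), f t = ∑ t ∈ range N, (f (2 * t) + f (2 * t + 1)) := by
  induction N with
  | zero => simp
  | succ N ih => rw [Nat.mul_succ, sum_range_succ, sum_range_succ, ih, sum_range_succ, add_assoc]

lemma walsh_mul_walsh_even_add_odd (t k k' : ℕ) :
    walsh (2 * t) k * walsh (2 * t) k' + walsh (2 * t + 1) k * walsh (2 * t + 1) k' =
      walsh t (k / 2) * walsh t (k' / 2) * if k % 2 = k' % 2 then 2 else 0 := by
  have h0 := walsh_bit false t
  have h1 := walsh_bit true t
  simp only [Nat.bit_false, Nat.bit_true, Bool.false_and, Bool.true_and, Nat.testBit_zero] at h0 h1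
  rw [h0, h0, h1, h1]
  rcases Nat.mod_two_eq_zero_or_one k with hk | hk <;>
    rcases Nat.mod_two_eq_zero_or_one k' with hk' | hk' <;> simp [hk, hk'] <;> ring

theorem sum_walsh_mul_walsh (s : ℕ) {k k' : ℕ} (hk : k < 2 ^ s) (hk' : k' < 2 ^ s) :
    ∑ t ∈ range (2 ^ s), walsh t k * walsh t k' = if k = k' then 2 ^ s else 0 := by
  induction s generalizing k k' with
  | zero => simp_all [walsh, bitOverlap]
  | succ s ih =>
    rw [pow_succ', sum_range_two_mul]
    simp only [walsh_mul_walsh_even_add_odd, ← sum_mul,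
      ih (k := k / 2) (k' := k' / 2) (by omega) (by omega)]
    by_cases hpar : k % 2 = k' % 2
    · have hhalf : k / 2 = k' / 2 ↔ k = k' := by omega
      simp only [hpar, hhalf]
      split_ifs <;> ring
    · simp [hpar, show k ≠ k' by rintro rfl; exact hpar rfl]

lemma walsh_mod_two_pow {t m : ℕ} (k : ℕ) (ht : t < 2 ^ m) : walsh t k = walsh t (k % 2 ^ m) := by
  have hland : t &&& k = t &&& (k % 2 ^ m) := by
    conv_lhs => rw [← Nat.mod_eq_of_lt ht, ← Nat.and_two_pow_sub_one_eq_mod]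
    rw [← Nat.and_two_pow_sub_one_eq_mod k, Nat.and_assoc, Nat.land_comm (2 ^ m - 1)]
  exact congrArg (fun x => (-1 : ℝ) ^ x.bits.count true) hland

def truncatedWalsh (n m k : ℕ) : EuclideanSpace ℝ (Fin (2 ^ n - 2 ^ m)) :=
  WithLp.toLp 2 fun j => walsh (j + 2 ^ m) k

theorem inner_truncatedWalsh {n m k k' : ℕ} (hmn : m ≤ n) (hk : k < 2 ^ n) (hk' : k' < 2 ^ n) :
    ⟪truncatedWalsh n m k, truncatedWalsh n m k'⟫_ℝ =
      (if k = k' then 2 ^ n else 0) - if k % 2 ^ m = k' % 2 ^ m then 2 ^ m else 0 := by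
  have hlow : ∑ t ∈ range (2 ^ m), walsh t k * walsh t k' =
      if k % 2 ^ m = k' % 2 ^ m then 2 ^ m else 0 := by
    rw [← sum_walsh_mul_walsh m (Nat.mod_lt k (by positivity)) (Nat.mod_lt k' (by positivity))]
    refine sum_congr rfl fun t ht => ?_
    rw [walsh_mod_two_pow k (mem_range.1 ht), walsh_mod_two_pow k' (mem_range.1 ht)]
  have hsplit := sum_range_add (fun t => walsh t k * walsh t k') (2 ^ m) (2 ^ n - 2 ^ m)
  rw [Nat.add_sub_cancel' (Nat.pow_le_pow_right two_pos hmn), sum_walsh_mul_walsh n hk hk',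
    hlow] at hsplit
  rw [hsplit, add_sub_cancel_left, PiLp.inner_apply,
    ← Fin.sum_univ_eq_sum_range (fun j => walsh (2 ^ m + j) k * walsh (2 ^ m + j) k')]
  simp [truncatedWalsh, add_comm, mul_comm]

theorem inner_truncatedWalsh_block {n m : ℕ} (hmn : m ≤ n) (i i' : Fin (2 ^ (n - m)))
    (r r' : Fin (2 ^ m)) :
    ⟪truncatedWalsh n m (i * 2 ^ m + r), truncatedWalsh n m (i' * 2 ^ m + r')⟫_ℝ =
      (if i = i' ∧ r = r' then 2 ^ n else 0) - if r = r' then 2 ^ m else 0 := by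
  have hidx : ∀ (i : Fin (2 ^ (n - m))) (r : Fin (2 ^ m)),
      (i : ℕ) * 2 ^ m + r = finProdFinEquiv (i, r) := fun i r => by
    simp [finProdFinEquiv_apply_val, add_comm, mul_comm]
  have hlt : 2 ^ (n - m) * 2 ^ m = 2 ^ n := by rw [← pow_add, Nat.sub_add_cancel hmn]
  have hinj : (i : ℕ) * 2 ^ m + r = i' * 2 ^ m + r' ↔ i = i' ∧ r = r' := by
    rw [hidx, hidx, Fin.val_inj, finProdFinEquiv.injective.eq_iff, Prod.mk.injEq]
  have hmod : ∀ (i : Fin (2 ^ (n - m))) (r : Fin (2 ^ m)), ((i : ℕ) * 2 ^ m + r) % 2 ^ m = r :=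
    fun i r => by simp [Nat.mod_eq_of_lt r.isLt]
  rw [inner_truncatedWalsh hmn (hidx i r ▸ hlt ▸ Fin.isLt _) (hidx i' r' ▸ hlt ▸ Fin.isLt _)]
  simp only [hinj, hmod, Fin.val_inj]

section
variable {E : Type*} [NormedAddCommGroup E] [InnerProductSpace ℝ E] {ι κ : Type*} [Fintype ι]
  [Fintype κ]

theorem starProjection_span_eq_smul_sum_rankOne [DecidableEq ι] {w : ι → E} {c : ℝ}
    (hc : c ≠ 0) (hw : ∀ a b, ⟪w a, w b⟫_ℝ = if a = b then c else 0)
    [(Submodule.span ℝ (Set.range w)).HasOrthogonalProjection] :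
    (Submodule.span ℝ (Set.range w)).starProjection = c⁻¹ • ∑ a, rankOne ℝ (w a) (w a) := by
  ext x
  simp only [smul_apply, _root_.sum_apply, rankOne_apply]
  apply Submodule.eq_starProjection_of_mem_of_inner_eq_zero
  · exact Submodule.smul_mem _ _ (Submodule.sum_mem _ fun a _ =>
      Submodule.smul_mem _ _ (Submodule.subset_span ⟨a, rfl⟩))
  · have hperp : ∀ b, ⟪x - c⁻¹ • ∑ a, ⟪w a, x⟫_ℝ • w a, w b⟫_ℝ = 0 := fun b => by
      simp only [inner_sub_left, real_inner_smul_left, sum_inner, hw, mul_ite, mul_zero,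
        sum_ite_eq', mem_univ, if_true, real_inner_comm x]
      field_simp
      ring
    intro u hu
    refine Submodule.mem_orthogonal_singleton_iff_inner_right.1 (Submodule.span_le.2 ?_ hu)
    rintro _ ⟨b, rfl⟩
    exact Submodule.mem_orthogonal_singleton_iff_inner_right.2 (hperp b)

theorem trace_sum_rankOne_comp_sum_rankOne [FiniteDimensional ℝ E] (u : ι → E) (w : κ → E) :
    LinearMap.trace ℝ E
        ((∑ a, rankOne ℝ (u a) (u a)) ∘L ∑ b, rankOne ℝ (w b) (w b)).toLinearMap =
      ∑ a, ∑ b, ⟪u a, w b⟫_ℝ ^ 2 := by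
  rw [← ContinuousLinearMap.mul_def, sum_mul]
  simp only [mul_sum, ContinuousLinearMap.mul_def, rankOne_comp_rankOne,
    ContinuousLinearMap.toLinearMap_sum, ContinuousLinearMap.toLinearMap_smul, map_sum, map_smul,
    trace_rankOne, smul_eq_mul, real_inner_comm (w _), sq]

theorem trace_starProjection_span_comp_starProjection_span [FiniteDimensional ℝ E]
    [DecidableEq ι] [DecidableEq κ]
    {u : ι → E} {w : κ → E} {c d : ℝ} (hc : c ≠ 0) (hd : d ≠ 0)
    (hu : ∀ a b, ⟪u a, u b⟫_ℝ = if a = b then c else 0)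
    (hw : ∀ a b, ⟪w a, w b⟫_ℝ = if a = b then d else 0) :
    LinearMap.trace ℝ E ((Submodule.span ℝ (Set.range u)).starProjection ∘L
        (Submodule.span ℝ (Set.range w)).starProjection).toLinearMap =
      (c * d)⁻¹ * ∑ a, ∑ b, ⟪u a, w b⟫_ℝ ^ 2 := by
  rw [starProjection_span_eq_smul_sum_rankOne hc hu, starProjection_span_eq_smul_sum_rankOne hd hw,
    ContinuousLinearMap.smul_comp, ContinuousLinearMap.comp_smul, smul_smul,
    ContinuousLinearMap.toLinearMap_smul, map_smul, trace_sum_rankOne_comp_sum_rankOne, smul_eq_mul,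
    mul_inv]

end

/-- The subspaces `W_i` in the Walsh–Hadamard fusion frame construction are
pairwise equi-distant in the chordal distance
`dist(W₁, W₂) = √(m − trace(P₁ P₂))`: for `i₁ ≠ i₂`,
`dist(W_{i₁}, W_{i₂}) = √(2^m − 2^m/(2^{n−m} − 1)²)`. -/
theorem stmt_15 (n m : ℕ) (hmn : m < n)
    (W : Fin (2 ^ (n - m)) → Submodule ℝ (EuclideanSpace ℝ (Fin (2 ^ n - 2 ^ m))))
    (hW : ∀ i : Fin (2 ^ (n - m)),
      W i = Submodule.span ℝ (Set.range (fun r : Fin (2 ^ m) =>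
        (WithLp.toLp 2 (fun j : Fin (2 ^ n - 2 ^ m) =>
          ((-1 : ℝ) ^ bitOverlap (j.val + 2 ^ m) (i.val * 2 ^ m + r.val))) :
            EuclideanSpace ℝ (Fin (2 ^ n - 2 ^ m)))))) :
    ∀ i₁ i₂ : Fin (2 ^ (n - m)), i₁ ≠ i₂ →
      Real.sqrt ((2 ^ m : ℝ) -
          LinearMap.trace ℝ (EuclideanSpace ℝ (Fin (2 ^ n - 2 ^ m)))
            ((((W i₁).subtypeL.comp ((W i₁).orthogonalProjectionOnto)).comp
              ((W i₂).subtypeL.comp ((W i₂).orthogonalProjectionOnto))).toLinearMap)) =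
        Real.sqrt ((2 ^ m : ℝ) - (2 ^ m : ℝ) / ((2 ^ (n - m) : ℝ) - 1) ^ 2) := by
  intro i₁ i₂ hne
  obtain rfl : W = fun i : Fin (2 ^ (n - m)) => Submodule.span ℝ (Set.range fun r : Fin (2 ^ m) =>
      truncatedWalsh n m ((i : ℕ) * 2 ^ m + r)) := funext hW
  have hsplit : (2 : ℝ) ^ n - 2 ^ m = 2 ^ m * (2 ^ (n - m) - 1) := by
    rw [mul_sub, ← pow_add, Nat.add_sub_cancel' hmn.le, mul_one]
  have hgap : (2 : ℝ) ^ (n - m) - 1 ≠ 0 :=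
    sub_ne_zero.2 (one_lt_pow₀ one_lt_two (Nat.sub_ne_zero_of_lt hmn)).ne'
  have hc : (2 : ℝ) ^ n - 2 ^ m ≠ 0 := hsplit ▸ mul_ne_zero (by positivity) hgap
  have hblock : ∀ (i : Fin (2 ^ (n - m))) (a b : Fin (2 ^ m)),
      ⟪truncatedWalsh n m (i * 2 ^ m + a), truncatedWalsh n m (i * 2 ^ m + b)⟫_ℝ =
        if a = b then 2 ^ n - 2 ^ m else 0 := fun i a b => by
    rw [inner_truncatedWalsh_block hmn.le]
    split_ifs <;> simp_all
  have hcross : ∀ a b : Fin (2 ^ m),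
      ⟪truncatedWalsh n m (i₁ * 2 ^ m + a), truncatedWalsh n m (i₂ * 2 ^ m + b)⟫_ℝ =
        if a = b then -2 ^ m else 0 := fun a b => by
    rw [inner_truncatedWalsh_block hmn.le]
    split_ifs <;> simp_all
  have hsum : ∑ a : Fin (2 ^ m), ∑ b : Fin (2 ^ m),
      ⟪truncatedWalsh n m (i₁ * 2 ^ m + a), truncatedWalsh n m (i₂ * 2 ^ m + b)⟫_ℝ ^ 2 =
        2 ^ m * (2 ^ m) ^ 2 := by
    simp [hcross, ite_pow]
  rw [← Submodule.starProjection.eq_1, ← Submodule.starProjection.eq_1,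
    trace_starProjection_span_comp_starProjection_span hc hc (hblock i₁) (hblock i₂), hsum, hsplit]
  field_simp
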